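/- There exists a string rewrite system (TRS over unary symbols) R₁ ∪ R₂ with R₁ = { c(L(x)) → R(x) } and R₂ = { R(a(x)) → b(b(R(x))), R(x) → L(x), b(L(x)) → L(a(x)) } such that for every n ≥ 1 there is a rewrite sequence from the term cⁿ(L(a(x))) to L(a^(2^n)(x)); in particular the derivational complexity of R₁ ∪ R₂ is at least exponential (Ω(2^n)). -/
import Mathlib


/-- The unary function symbols of the string rewrite system. -/
inductive Sg : Type
  | c | L | R | a | b
deriving DecidableEq

/-- The rules of R₁ ∪ R₂, as pairs of strings (terms over unary symbols). -/
def srule (l r : List Sg) : Prop :=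
  (l = [Sg.c, Sg.L] ∧ r = [Sg.R]) ∨                -- c(L(x)) → R(x)
  (l = [Sg.R, Sg.a] ∧ r = [Sg.b, Sg.b, Sg.R]) ∨    -- R(a(x)) → b(b(R(x)))
  (l = [Sg.R] ∧ r = [Sg.L]) ∨                      -- R(x) → L(x)
  (l = [Sg.b, Sg.L] ∧ r = [Sg.L, Sg.a])            -- b(L(x)) → L(a(x))

/-- One rewrite step: a rule applied in an arbitrary context. -/
def sstep (s t : List Sg) : Prop :=
  ∃ u l r v, srule l r ∧ s = u ++ l ++ v ∧ t = u ++ r ++ v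

/-- `iter r m a b`: an `r`-sequence of length `m` from `a` to `b`. -/
def iter {A : Type*} (r : A → A → Prop) : ℕ → A → A → Prop
  | 0 => fun a b => a = b
  | n + 1 => fun a c => ∃ b, r a b ∧ iter r n b c

lemma iter_trans {A : Type*} {r : A → A → Prop} :
    ∀ {m p : ℕ} {a b c : A}, iter r m a b → iter r p b c → iter r (m + p) a c := by
  intro m
  induction m with
  | zero => intro p a b c h1 h2; cases h1; simpa using h2
  | succ k ih =>
    intro p a b c h1 h2
    obtain ⟨d, hd, hrest⟩ := h1
    have : iter r (k + p + 1) a c := ⟨d, hd, ih hrest h2⟩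
    rwa [Nat.add_right_comm]

lemma sstep_append_left (u : List Sg) {s t : List Sg} (h : sstep s t) :
    sstep (u ++ s) (u ++ t) := by
  obtain ⟨u', l, r, v, hr, hs, ht⟩ := h
  exact ⟨u ++ u', l, r, v, hr, by simp [hs], by simp [ht]⟩

lemma iter_append_left (u : List Sg) {m : ℕ} :
    ∀ {s t : List Sg}, iter sstep m s t → iter sstep m (u ++ s) (u ++ t) := by
  induction m with
  | zero => intro s t h; cases h; rfl
  | succ k ih =>
    intro s t h
    obtain ⟨b, hb, hrest⟩ := h
    exact ⟨u ++ b, sstep_append_left u hb, ih hrest⟩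

lemma step1 (v : List Sg) : sstep ([Sg.c, Sg.L] ++ v) ([Sg.R] ++ v) :=
  ⟨[], [Sg.c, Sg.L], [Sg.R], v, Or.inl ⟨rfl, rfl⟩, rfl, rfl⟩

lemma step2 (v : List Sg) : sstep ([Sg.R, Sg.a] ++ v) ([Sg.b, Sg.b, Sg.R] ++ v) :=
  ⟨[], [Sg.R, Sg.a], [Sg.b, Sg.b, Sg.R], v, Or.inr (Or.inl ⟨rfl, rfl⟩), rfl, rfl⟩

lemma step3 (v : List Sg) : sstep ([Sg.R] ++ v) ([Sg.L] ++ v) :=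
  ⟨[], [Sg.R], [Sg.L], v, Or.inr (Or.inr (Or.inl ⟨rfl, rfl⟩)), rfl, rfl⟩

lemma step4 (v : List Sg) : sstep ([Sg.b, Sg.L] ++ v) ([Sg.L, Sg.a] ++ v) :=
  ⟨[], [Sg.b, Sg.L], [Sg.L, Sg.a], v, Or.inr (Or.inr (Or.inr ⟨rfl, rfl⟩)), rfl, rfl⟩

/-- Phase A: R aᵏ v →ᵏ b^{2k} R v -/
lemma phaseA : ∀ (k : ℕ) (v : List Sg),
    iter sstep k ([Sg.R] ++ List.replicate k Sg.a ++ v)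
      (List.replicate (2 * k) Sg.b ++ [Sg.R] ++ v) := by
  intro k
  induction k with
  | zero => intro v; simp [iter]
  | succ n ih =>
    intro v
    refine ⟨[Sg.b, Sg.b] ++ ([Sg.R] ++ List.replicate n Sg.a ++ v), ?_, ?_⟩
    · have := step2 (List.replicate n Sg.a ++ v)
      simpa [List.replicate_succ] using this
    · have := iter_append_left [Sg.b, Sg.b] (ih v)
      have e : [Sg.b, Sg.b] ++ (List.replicate (2 * n) Sg.b ++ [Sg.R] ++ v)
          = List.replicate (2 * (n + 1)) Sg.b ++ [Sg.R] ++ v := by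
        have : 2 * (n + 1) = 2 + 2 * n := by ring
        simp [this, List.replicate_add]
      rw [← e]; exact this

/-- Phase B: bᵏ L v →ᵏ L aᵏ v -/
lemma phaseB : ∀ (k : ℕ) (v : List Sg),
    iter sstep k (List.replicate k Sg.b ++ [Sg.L] ++ v)
      ([Sg.L] ++ List.replicate k Sg.a ++ v) := by
  intro k
  induction k with
  | zero => intro v; simp [iter]
  | succ n ih =>
    intro v
    refine ⟨List.replicate n Sg.b ++ [Sg.L] ++ ([Sg.a] ++ v), ?_, ?_⟩
    · have := sstep_append_left (List.replicate n Sg.b) (step4 v)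
      have e1 : List.replicate (n + 1) Sg.b ++ [Sg.L] ++ v
          = List.replicate n Sg.b ++ ([Sg.b, Sg.L] ++ v) := by
        simp [List.replicate_succ']
      have e2 : List.replicate n Sg.b ++ [Sg.L] ++ ([Sg.a] ++ v)
          = List.replicate n Sg.b ++ ([Sg.L, Sg.a] ++ v) := by simp
      rw [e1, e2]; exact this
    · have := ih ([Sg.a] ++ v)
      have e : [Sg.L] ++ List.replicate n Sg.a ++ ([Sg.a] ++ v)
          = [Sg.L] ++ List.replicate (n + 1) Sg.a ++ v := by
        simp [List.replicate_succ']
      rw [← e]; exact this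

/-- One full doubling pass: c L aᵏ v →^{3k+2} L a^{2k} v -/
lemma phase (k : ℕ) (v : List Sg) :
    iter sstep (3 * k + 2) ([Sg.c, Sg.L] ++ List.replicate k Sg.a ++ v)
      ([Sg.L] ++ List.replicate (2 * k) Sg.a ++ v) := by
  have h1 : iter sstep 1 ([Sg.c, Sg.L] ++ List.replicate k Sg.a ++ v)
      ([Sg.R] ++ List.replicate k Sg.a ++ v) :=
    ⟨_, by simpa using step1 (List.replicate k Sg.a ++ v), rfl⟩
  have h2 := phaseA k v
  have h3 : iter sstep 1 (List.replicate (2 * k) Sg.b ++ [Sg.R] ++ v)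
      (List.replicate (2 * k) Sg.b ++ [Sg.L] ++ v) :=
    ⟨_, by simpa using sstep_append_left (List.replicate (2 * k) Sg.b) (step3 v), rfl⟩
  have h4 := phaseB (2 * k) v
  have := iter_trans h1 (iter_trans h2 (iter_trans h3 h4))
  have e : 1 + (k + (1 + 2 * k)) = 3 * k + 2 := by ring
  rwa [e] at this

/-- Number of steps for `n` doubling passes starting from `k` copies of `a`. -/
def mfun : ℕ → ℕ → ℕ
  | 0, _ => 0
  | n + 1, k => 3 * k + 2 + mfun n (2 * k)

lemma main : ∀ (n k : ℕ) (v : List Sg),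
    iter sstep (mfun n k)
      (List.replicate n Sg.c ++ [Sg.L] ++ List.replicate k Sg.a ++ v)
      ([Sg.L] ++ List.replicate (2 ^ n * k) Sg.a ++ v) := by
  intro n
  induction n with
  | zero => intro k v; simp [mfun, iter]
  | succ p ih =>
    intro k v
    have h1 : iter sstep (3 * k + 2)
        (List.replicate (p + 1) Sg.c ++ [Sg.L] ++ List.replicate k Sg.a ++ v)
        (List.replicate p Sg.c ++ ([Sg.L] ++ List.replicate (2 * k) Sg.a ++ v)) := by
      have := iter_append_left (List.replicate p Sg.c) (phase k v)
      have e : List.replicate (p + 1) Sg.c ++ [Sg.L] ++ List.replicate k Sg.a ++ v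
          = List.replicate p Sg.c ++ ([Sg.c, Sg.L] ++ List.replicate k Sg.a ++ v) := by
        simp [List.replicate_succ']
      rw [e]; exact this
    have h2 := ih (2 * k) v
    have h2' : iter sstep (mfun p (2 * k))
        (List.replicate p Sg.c ++ ([Sg.L] ++ List.replicate (2 * k) Sg.a ++ v))
        ([Sg.L] ++ List.replicate (2 ^ (p + 1) * k) Sg.a ++ v) := by
      have e1 : List.replicate p Sg.c ++ ([Sg.L] ++ List.replicate (2 * k) Sg.a ++ v)
          = List.replicate p Sg.c ++ [Sg.L] ++ List.replicate (2 * k) Sg.a ++ v := by simp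
      have e2 : 2 ^ p * (2 * k) = 2 ^ (p + 1) * k := by ring
      rw [e1]; rw [← e2]; exact h2
    have := iter_trans h1 h2'
    simpa [mfun] using this

lemma mfun_lb : ∀ (n k : ℕ), 3 * (2 ^ n - 1) * k ≤ mfun n k := by
  intro n
  induction n with
  | zero => intro k; simp [mfun]
  | succ p ih =>
    intro k
    have h := ih (2 * k)
    have hp : 1 ≤ 2 ^ p := Nat.one_le_two_pow
    simp only [mfun]
    have : 3 * (2 ^ (p + 1) - 1) * k ≤ 3 * k + 3 * (2 ^ p - 1) * (2 * k) := by
      have e : 2 ^ (p + 1) = 2 * 2 ^ p := by ring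
      obtain ⟨s, hs⟩ := Nat.exists_eq_add_of_le hp
      rw [e, hs]
      have h1 : 2 * (1 + s) - 1 = 2 * s + 1 := by omega
      have h2 : 1 + s - 1 = s := by omega
      rw [h1, h2]
      exact le_of_eq (by ring)
    omega

theorem stmt5 :
    ∀ n : ℕ, 1 ≤ n →
      ∃ m : ℕ,
        iter sstep m (List.replicate n Sg.c ++ [Sg.L, Sg.a])
          ([Sg.L] ++ List.replicate (2 ^ n) Sg.a) ∧
        2 ^ n ≤ m := by
  intro n hn
  refine ⟨mfun n 1, ?_, ?_⟩
  · have := main n 1 []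
    simpa using this
  · have h := mfun_lb n 1
    have hp : 2 ^ 1 ≤ 2 ^ n := Nat.pow_le_pow_right (by norm_num) hn
    simp at hp
    omega
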